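/- Let H be a symmetric positive definite real n×n matrix, b ∈ ℝⁿ, and f(x) = ½·xᵀHx − bᵀx. Let u₁, …, u_k ∈ ℝⁿ and let S be their span. If x₁ minimizes f over the affine subspace a₁ + S and x₂ minimizes f over the affine subspace a₂ + S (for some a₁, a₂ ∈ ℝⁿ), then the direction x₂ − x₁ is conjugate to every vector of S, i.e., (x₂ − x₁)ᵀ H u = 0 for all u ∈ S. -/

import Mathlib

open Matrix

/-!
Along a line `t ↦ x + t • v` with `v ∈ S`, the quadratic `f` is the polynomial
`f x + (x ⬝ᵥ H *ᵥ v - b ⬝ᵥ v) t + ½ (v ⬝ᵥ H *ᵥ v) t²` (this uses the symmetry of `H`).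
At a minimizer over `a + S` this polynomial is minimal at `t = 0`, so its linear
coefficient vanishes: `x ⬝ᵥ H *ᵥ v = b ⬝ᵥ v`. This holds for `x₁` and `x₂` alike, and
subtracting the two identities gives the conjugacy.
-/

lemma eq_zero_of_forall_nonneg_mul_sq_add_mul {a c : ℝ}
    (h : ∀ t : ℝ, 0 ≤ a * t ^ 2 + c * t) : c = 0 := by
  have hmin : IsLocalMin (fun t : ℝ ↦ a * t ^ 2 + c * t) 0 :=
    Filter.Eventually.of_forall fun t ↦ by simpa using h t
  have hderiv :=
    ((hasDerivAt_pow 2 (0 : ℝ)).const_mul a).add ((hasDerivAt_id (0 : ℝ)).const_mul c)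
  simp only [id_eq, Nat.cast_ofNat, Nat.add_one_sub_one, pow_one, mul_zero, mul_one, zero_add]
    at hderiv
  exact hmin.hasDerivAt_eq_zero hderiv

section Quadratic

variable {ι : Type*} [Fintype ι]

noncomputable def quadratic (H : Matrix ι ι ℝ) (b x : ι → ℝ) : ℝ :=
  1 / 2 * (x ⬝ᵥ H *ᵥ x) - b ⬝ᵥ x

lemma quadratic_add_smul {H : Matrix ι ι ℝ} (hH : H.IsSymm) (b x v : ι → ℝ) (t : ℝ) :
    quadratic H b (x + t • v) =
      quadratic H b x + (1 / 2 * (v ⬝ᵥ H *ᵥ v)) * t ^ 2 + (x ⬝ᵥ H *ᵥ v - b ⬝ᵥ v) * t := by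
  have hsymm : v ⬝ᵥ H *ᵥ x = x ⬝ᵥ H *ᵥ v := by
    rw [dotProduct_mulVec, dotProduct_comm, ← mulVec_transpose, hH.eq]
  simp only [quadratic, mulVec_add, mulVec_smul, dotProduct_add, add_dotProduct,
    smul_dotProduct, dotProduct_smul, smul_eq_mul, hsymm]
  ring

lemma mulVec_dotProduct_eq_of_isMin_affine {H : Matrix ι ι ℝ} (hH : H.IsSymm) {b : ι → ℝ}
    {S : Submodule ℝ (ι → ℝ)} {a x : ι → ℝ} (hmem : x - a ∈ S)
    (hmin : ∀ y, y - a ∈ S → quadratic H b x ≤ quadratic H b y)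
    {v : ι → ℝ} (hv : v ∈ S) : x ⬝ᵥ H *ᵥ v = b ⬝ᵥ v := by
  have hline : ∀ t : ℝ, 0 ≤ (1 / 2 * (v ⬝ᵥ H *ᵥ v)) * t ^ 2 + (x ⬝ᵥ H *ᵥ v - b ⬝ᵥ v) * t := by
    intro t
    have hle := hmin (x + t • v) <| by
      simpa [add_sub_right_comm] using S.add_mem hmem (S.smul_mem t hv)
    rw [quadratic_add_smul hH] at hle
    linarith
  exact sub_eq_zero.mp (eq_zero_of_forall_nonneg_mul_sq_add_mul hline)

end Quadratic

theorem cdos_parallel_subspace_conjugate_general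
    {n : ℕ} (H : Matrix (Fin n) (Fin n) ℝ) (hH : H.IsSymm)
    (b : Fin n → ℝ) (f : (Fin n → ℝ) → ℝ)
    (hf : ∀ x, f x = (1 / 2 : ℝ) * (x ⬝ᵥ H.mulVec x) - b ⬝ᵥ x)
    (S : Submodule ℝ (Fin n → ℝ))
    (a₁ a₂ x₁ x₂ : Fin n → ℝ)
    (hx₁mem : x₁ - a₁ ∈ S) (hx₁min : ∀ y, y - a₁ ∈ S → f x₁ ≤ f y)
    (hx₂mem : x₂ - a₂ ∈ S) (hx₂min : ∀ y, y - a₂ ∈ S → f x₂ ≤ f y) :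
    ∀ v ∈ S, (x₂ - x₁) ⬝ᵥ H.mulVec v = 0 := by
  obtain rfl : f = quadratic H b := funext hf
  intro v hv
  rw [sub_dotProduct, mulVec_dotProduct_eq_of_isMin_affine hH hx₁mem hx₁min hv,
    mulVec_dotProduct_eq_of_isMin_affine hH hx₂mem hx₂min hv, sub_self]

/-- **Parallel subspace property.** If `x₁` minimizes the quadratic
`f(x) = ½ xᵀHx − bᵀx` over the affine subspace `a₁ + S` and `x₂` minimizes `f`
over `a₂ + S`, where `S` is the span of `u₁, …, u_k`, then `x₂ − x₁` is
conjugate (with respect to `H`) to every vector of `S`. -/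
theorem cdos_parallel_subspace_conjugate
    {n : ℕ} (H : Matrix (Fin n) (Fin n) ℝ) (hH : H.IsSymm) (hpd : H.PosDef)
    (b : Fin n → ℝ) (f : (Fin n → ℝ) → ℝ)
    (hf : ∀ x, f x = (1 / 2 : ℝ) * (x ⬝ᵥ H.mulVec x) - b ⬝ᵥ x)
    {k : ℕ} (u : Fin k → (Fin n → ℝ))
    (S : Submodule ℝ (Fin n → ℝ)) (hS : S = Submodule.span ℝ (Set.range u))
    (a₁ a₂ x₁ x₂ : Fin n → ℝ)
    (hx₁mem : x₁ - a₁ ∈ S) (hx₁min : ∀ y, y - a₁ ∈ S → f x₁ ≤ f y)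
    (hx₂mem : x₂ - a₂ ∈ S) (hx₂min : ∀ y, y - a₂ ∈ S → f x₂ ≤ f y) :
    ∀ v ∈ S, (x₂ - x₁) ⬝ᵥ H.mulVec v = 0 :=
  cdos_parallel_subspace_conjugate_general H hH b f hf S a₁ a₂ x₁ x₂ hx₁mem hx₁min hx₂mem hx₂min
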